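/- Let l ≥ 1 be an integer, let λ > 0, r ∈ (1,2) and δ ≥ 0, and define D(e) = ((eᵀe)^{1−1/r} − λ)/((eᵀe)^{1−1/r} + λ) for e ∈ ℝ^l. Let (d_k)_{k∈ℕ} be any sequence in ℝ^l with ‖d_k‖ ≤ δ for all k, and let (x_k)_{k∈ℕ} in ℝ^l satisfy x_{k+1} = D(x_k)·x_k − d_k for all k. Then there exist a constant R > 0 depending only on λ, r and δ, and an integer N ∈ ℕ, such that ‖x_k‖ ≤ R for all k ≥ N. -/
import Mathlib


open scoped InnerProductSpace

/-- The ultra-local-model observer gain function D of Proposition 1. -/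
noncomputable def Dfun (l : ℕ) (lam r : ℝ) (e : EuclideanSpace ℝ (Fin l)) : ℝ :=
  (⟪e, e⟫_ℝ ^ (1 - 1 / r) - lam) / (⟪e, e⟫_ℝ ^ (1 - 1 / r) + lam)

/-- Proposition 1 (robustness): the perturbed recursion x_{k+1} = D(x_k) x_k - d_k with
‖d_k‖ ≤ δ converges in finitely many steps to a ball of radius R = R(λ, r, δ). -/
theorem stmt_11 (l : ℕ) (hl : 1 ≤ l) (lam r δ : ℝ) (hlam : 0 < lam)
    (hr : r ∈ Set.Ioo (1:ℝ) 2) (hδ : 0 ≤ δ) :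
    ∃ R : ℝ, 0 < R ∧
      ∀ d x : ℕ → EuclideanSpace ℝ (Fin l),
        (∀ k, ‖d k‖ ≤ δ) →
        (∀ k, x (k + 1) = Dfun l lam r (x k) • x k - d k) →
        ∃ N : ℕ, ∀ k ≥ N, ‖x k‖ ≤ R := by
  obtain ⟨hr1, hr2⟩ := hr
  have hr0 : (0:ℝ) < r := by linarith
  set p : ℝ := 1 - 1 / r with hpdef
  have hp : 0 < p := by
    have : 1 / r < 1 := by
      rw [div_lt_one hr0]; exact hr1
    simp only [hpdef]; linarith
  have h2p : 2 * p < 1 := by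
    have : (1:ℝ) / 2 < 1 / r := by
      apply one_div_lt_one_div_of_lt hr0 hr2
    simp only [hpdef]; linarith
  set q : ℝ := 1 - 2 * p with hqdef
  have hq : 0 < q := by simp only [hqdef]; linarith
  -- D in terms of a(e) = ‖e‖ ^ (2p)
  have hDform : ∀ e : EuclideanSpace ℝ (Fin l),
      Dfun l lam r e = (‖e‖ ^ (2*p) - lam) / (‖e‖ ^ (2*p) + lam) := by
    intro e
    have h1 : ⟪e, e⟫_ℝ = ‖e‖ ^ (2:ℕ) := real_inner_self_eq_norm_sq e
    have h2 : (⟪e, e⟫_ℝ) ^ p = ‖e‖ ^ (2*p) := by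
      rw [h1, ← Real.rpow_natCast ‖e‖ 2, ← Real.rpow_mul (norm_nonneg e)]
      norm_num
    simp only [Dfun, ← hpdef, h2]
  have ha_nonneg : ∀ e : EuclideanSpace ℝ (Fin l), 0 ≤ ‖e‖ ^ (2*p) :=
    fun e => Real.rpow_nonneg (norm_nonneg e) _
  -- |D| ≤ 1 always
  have hDle1 : ∀ e : EuclideanSpace ℝ (Fin l), |Dfun l lam r e| ≤ 1 := by
    intro e
    rw [hDform e, abs_div]
    have ha := ha_nonneg e
    have hden : 0 < ‖e‖ ^ (2*p) + lam := by linarith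
    rw [div_le_one (by rwa [abs_of_pos hden]) ]
    rw [abs_of_pos hden]
    rw [abs_le]
    constructor <;> linarith
  have hsmall : ∀ e : EuclideanSpace ℝ (Fin l), ‖Dfun l lam r e • e‖ ≤ ‖e‖ := by
    intro e
    rw [norm_smul, Real.norm_eq_abs]
    calc |Dfun l lam r e| * ‖e‖ ≤ 1 * ‖e‖ :=
      mul_le_mul_of_nonneg_right (hDle1 e) (norm_nonneg e)
    _ = ‖e‖ := one_mul _
  -- thresholds
  set t₁ : ℝ := max 1 (lam ^ (1 / (2*p))) with ht1def
  set t₂ : ℝ := max 1 (((δ+1) / lam) ^ (1 / q)) with ht2def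
  set R₀ : ℝ := max t₁ t₂ with hR0def
  have hR0_one : (1:ℝ) ≤ R₀ := le_trans (le_max_left 1 _) (le_max_left t₁ t₂)
  set R : ℝ := R₀ + δ + 1 with hRdef
  have hR0_pos : 0 < R₀ := by linarith
  have hRpos : 0 < R := by linarith
  have hR0leR : R₀ ≤ R := by linarith
  -- key decrease lemma
  have key : ∀ e : EuclideanSpace ℝ (Fin l), R₀ ≤ ‖e‖ →
      ‖Dfun l lam r e • e‖ + (δ + 1) ≤ ‖e‖ := by
    intro e he
    set t : ℝ := ‖e‖ with htdef
    have ht1 : (1:ℝ) ≤ t := le_trans hR0_one he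
    have ht0 : 0 < t := by linarith
    set a : ℝ := t ^ (2*p) with hadef
    have ha0 : 0 ≤ a := Real.rpow_nonneg (le_of_lt ht0) _
    -- a ≥ lam
    have halam : lam ≤ a := by
      have h1 : lam ^ (1/(2*p)) ≤ t :=
        le_trans (le_max_right 1 _) (le_trans (le_max_left t₁ t₂) he)
      have h2 : (lam ^ (1/(2*p))) ^ (2*p) ≤ t ^ (2*p) :=
        Real.rpow_le_rpow (Real.rpow_nonneg (le_of_lt hlam) _) h1 (by linarith)
      have h3 : (lam ^ (1/(2*p))) ^ (2*p) = lam := by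
        rw [← Real.rpow_mul (le_of_lt hlam)]
        rw [one_div_mul_cancel (by linarith : 2*p ≠ 0), Real.rpow_one]
      rw [h3] at h2; exact h2
    have hapos : 0 < a := lt_of_lt_of_le hlam halam
    have hden : 0 < a + lam := by linarith
    -- lam * t^q ≥ δ + 1
    have hq1 : δ + 1 ≤ lam * t ^ q := by
      have h1 : ((δ+1)/lam) ^ (1/q) ≤ t :=
        le_trans (le_max_right 1 _) (le_trans (le_max_right t₁ t₂) he)
      have hbase : (0:ℝ) ≤ (δ+1)/lam := div_nonneg (by linarith) (le_of_lt hlam)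
      have h2 : (((δ+1)/lam) ^ (1/q)) ^ q ≤ t ^ q :=
        Real.rpow_le_rpow (Real.rpow_nonneg hbase _) h1 (le_of_lt hq)
      have h3 : (((δ+1)/lam) ^ (1/q)) ^ q = (δ+1)/lam := by
        rw [← Real.rpow_mul hbase, one_div_mul_cancel (ne_of_gt hq), Real.rpow_one]
      rw [h3] at h2
      calc δ + 1 = lam * ((δ+1)/lam) := by field_simp
      _ ≤ lam * t ^ q := mul_le_mul_of_nonneg_left h2 (le_of_lt hlam)
    -- t^q = t / a
    have htq : t ^ q = t / a := by
      rw [hqdef, Real.rpow_sub ht0, Real.rpow_one]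
    -- δ + 1 ≤ 2 * lam * t / (a + lam)
    have hstep : δ + 1 ≤ 2 * lam * t / (a + lam) := by
      have h1 : lam * t / a ≤ 2 * lam * t / (a + lam) := by
        rw [div_le_div_iff₀ hapos hden]
        nlinarith [mul_pos hlam ht0]
      calc δ + 1 ≤ lam * t ^ q := hq1
      _ = lam * t / a := by rw [htq]; ring
      _ ≤ 2 * lam * t / (a + lam) := h1
    -- compute the norm
    have hDnn : 0 ≤ (a - lam) / (a + lam) := div_nonneg (by linarith) (le_of_lt hden)
    have hnorm : ‖Dfun l lam r e • e‖ = (a - lam) / (a + lam) * t := by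
      rw [norm_smul, Real.norm_eq_abs, hDform e, ← htdef, ← hadef, abs_of_nonneg hDnn]
    rw [hnorm]
    have hid : (a - lam) / (a + lam) * t = t - 2 * lam * t / (a + lam) := by
      field_simp
      ring
    rw [hid]
    linarith
  refine ⟨R, hRpos, ?_⟩
  intro d x hd hx
  -- general step bound
  have hstep_small : ∀ k, ‖x (k+1)‖ ≤ ‖x k‖ + δ := by
    intro k
    rw [hx k]
    calc ‖Dfun l lam r (x k) • x k - d k‖ ≤ ‖Dfun l lam r (x k) • x k‖ + ‖d k‖ :=
      norm_sub_le _ _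
    _ ≤ ‖x k‖ + δ := add_le_add (hsmall _) (hd k)
  have hstep_big : ∀ k, R₀ ≤ ‖x k‖ → ‖x (k+1)‖ + 1 ≤ ‖x k‖ := by
    intro k hk
    have := key (x k) hk
    have h2 : ‖x (k+1)‖ ≤ ‖Dfun l lam r (x k) • x k‖ + δ := by
      rw [hx k]
      calc ‖Dfun l lam r (x k) • x k - d k‖ ≤ ‖Dfun l lam r (x k) • x k‖ + ‖d k‖ :=
        norm_sub_le _ _
      _ ≤ _ := by linarith [hd k]
    linarith
  -- existence of a time entering the ball of radius R
  have hexists : ∃ N, ‖x N‖ ≤ R := by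
    by_contra hno
    push_neg at hno
    have hdec : ∀ k, ‖x k‖ + k ≤ ‖x 0‖ := by
      intro k
      induction k with
      | zero => simp
      | succ n ih =>
        have h1 : R₀ ≤ ‖x n‖ := le_trans hR0leR (le_of_lt (hno n))
        have := hstep_big n h1
        push_cast
        push_cast at ih
        linarith
    obtain ⟨n, hn⟩ := exists_nat_gt ‖x 0‖
    have h1 := hdec n
    have h2 := norm_nonneg (x n)
    linarith
  obtain ⟨N, hN⟩ := hexists
  -- invariance
  have hinv : ∀ k, ‖x k‖ ≤ R → ‖x (k+1)‖ ≤ R := by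
    intro k hk
    by_cases hc : R₀ ≤ ‖x k‖
    · have := hstep_big k hc
      linarith
    · push_neg at hc
      have := hstep_small k
      linarith
  refine ⟨N, ?_⟩
  intro k hk
  induction k with
  | zero =>
    have : N = 0 := Nat.le_zero.mp hk
    rw [this] at hN; exact hN
  | succ n ih =>
    rcases Nat.lt_or_ge N (n+1) with h | h
    · exact hinv n (ih (Nat.lt_succ_iff.mp h))
    · have : N = n + 1 := le_antisymm hk h
      rw [this] at hN; exact hN
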